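/- Let Ω ⊂ ℝ² be a bounded simply connected J-John domain. Then the boundary ∂Ω has zero 2-dimensional Lebesgue measure. -/

import Mathlib

open MeasureTheory Set
open scoped ENNReal NNReal

noncomputable section

/-- The Euclidean plane `ℝ²`. -/
abbrev Plane : Type := EuclideanSpace ℝ (Fin 2)

/-- `γ` parametrizes a curve from `x` to `y` inside `S`, defined on `[0,1]`. -/
def IsCurveIn (S : Set Plane) (x y : Plane) (γ : ℝ → Plane) : Prop :=
  ContinuousOn γ (Icc 0 1) ∧ γ 0 = x ∧ γ 1 = y ∧ γ '' Icc 0 1 ⊆ S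

/-- The length of a curve parametrized on `[0,1]`, as its total variation. -/
def curveLength (γ : ℝ → Plane) : ℝ≥0∞ :=
  eVariationOn γ (Icc 0 1)

/-- A set `S ⊆ ℝ²` is `C`-quasiconvex: any two of its points are joined by a rectifiable
curve in `S` of length at most `C` times their distance. -/
def QuasiconvexSet (C : ℝ) (S : Set Plane) : Prop :=
  ∀ x ∈ S, ∀ y ∈ S, ∃ γ : ℝ → Plane, IsCurveIn S x y γ ∧
    curveLength γ ≤ ENNReal.ofReal (C * dist x y)

/-- `g` is a distributional (weak) gradient of `u` on the open set `Ω`: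
integration by parts against all smooth compactly supported test functions in `Ω`. -/
def HasWeakGradOn (u : Plane → ℝ) (g : Plane → Plane) (Ω : Set Plane) : Prop :=
  ∀ φ : Plane → ℝ, ContDiff ℝ (⊤ : ℕ∞) φ → HasCompactSupport φ → tsupport φ ⊆ Ω →
    ∀ v : Plane, ∫ x in Ω, u x * fderiv ℝ φ x v = - ∫ x in Ω, (inner ℝ (g x) v : ℝ) * φ x

/-- The `W^{1,p}(Ω)` norm of the pair `(u, g)` (function and its weak gradient). -/
def W1Norm (p : ℝ≥0∞) (Ω : Set Plane) (u : Plane → ℝ) (g : Plane → Plane) : ℝ≥0∞ :=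
  eLpNorm u p (volume.restrict Ω) + eLpNorm g p (volume.restrict Ω)

/-- `u`, together with the weak gradient `g`, belongs to `W^{1,p}(Ω)`. -/
def MemW1p (p : ℝ≥0∞) (Ω : Set Plane) (u : Plane → ℝ) (g : Plane → Plane) : Prop :=
  HasWeakGradOn u g Ω ∧ MemLp u p (volume.restrict Ω) ∧ MemLp g p (volume.restrict Ω)

/-- Every function of `W^{1,p}(Ω)` has an extension to `W^{1,p}(ℝ²)` with norm
inflation at most `C`. -/
def HasW1ExtensionWithConst (p : ℝ≥0∞) (Ω : Set Plane) (C : ℝ) : Prop :=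
  ∀ u g, MemW1p p Ω u g → ∃ U G, MemW1p p Set.univ U G ∧
    (∀ᵐ x ∂(volume.restrict Ω), U x = u x) ∧
    W1Norm p Set.univ U G ≤ ENNReal.ofReal C * W1Norm p Ω u g

/-- `Ω` is a `W^{1,p}`-extension domain. -/
def IsW1ExtensionDomain (p : ℝ≥0∞) (Ω : Set Plane) : Prop :=
  ∃ C : ℝ, 1 ≤ C ∧ HasW1ExtensionWithConst p Ω C

/-- The curve condition of Theorem 1.1: any two points of `Ωᶜ` are joined by a curve
in `Ωᶜ` of length at most `C |x - y|` meeting `∂Ω` in a set of `ℋ¹`-measure zero. -/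
def CurveCondition (C : ℝ) (Ω : Set Plane) : Prop :=
  ∀ x ∈ Ωᶜ, ∀ y ∈ Ωᶜ, ∃ γ : ℝ → Plane, IsCurveIn Ωᶜ x y γ ∧
    curveLength γ ≤ ENNReal.ofReal (C * dist x y) ∧
    μH[1] (γ '' Icc 0 1 ∩ frontier Ω) = 0

/-- `Γ` is a Jordan curve: the image of a continuous injective loop. -/
def IsJordanCurve (Γ : Set Plane) : Prop :=
  ∃ γ : ℝ → Plane, ContinuousOn γ (Icc 0 1) ∧ γ 0 = γ 1 ∧
    InjOn γ (Ico 0 1) ∧ γ '' Icc 0 1 = Γ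

/-- A Jordan domain: a bounded domain whose boundary is a Jordan curve. -/
def IsJordanDomain (Ω : Set Plane) : Prop :=
  IsOpen Ω ∧ IsConnected Ω ∧ Bornology.IsBounded Ω ∧ IsJordanCurve (frontier Ω)

/-- The complementary domain of a Jordan domain: the unbounded connected component of
the complement of its closure. -/
def complementaryDomain (Ω : Set Plane) : Set Plane :=
  {x | x ∈ (closure Ω)ᶜ ∧ ¬ Bornology.IsBounded (connectedComponentIn (closure Ω)ᶜ x)}

/-- `Ω` is a `J`-John domain: every point is joined to the distinguished point `x₀` by an
arc-length parametrized curve `γ` with `dist(γ(t), Ωᶜ) ≥ J t`. -/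
def IsJohnDomain (J : ℝ) (Ω : Set Plane) : Prop :=
  IsOpen Ω ∧ IsConnected Ω ∧ ∃ x₀ ∈ Ω, ∀ x ∈ Ω, ∃ (len : ℝ) (γ : ℝ → Plane),
    0 ≤ len ∧ ContinuousOn γ (Icc 0 len) ∧ γ 0 = x ∧ γ len = x₀ ∧
    (∀ t ∈ Icc 0 len, γ t ∈ Ω) ∧
    (∀ t ∈ Icc 0 len, eVariationOn γ (Icc 0 t) = ENNReal.ofReal t) ∧
    (∀ t ∈ Icc 0 len, J * t ≤ Metric.infDist (γ t) Ωᶜ)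

/-- **Lemma 2.8 (4).** The boundary of a bounded simply connected `J`-John domain in the
plane has zero Lebesgue measure. -/
theorem john_boundary_measure_zero (J : ℝ) (hJ : 0 < J) (Ω : Set Plane)
    (hbdd : Bornology.IsBounded Ω) (hsc : SimplyConnectedSpace ↥Ω)
    (hjohn : IsJohnDomain J Ω) :
    volume (frontier Ω) = 0 := by
  classical
  obtain ⟨hopen, hconn, x₀, hx₀, hJohn⟩ := hjohn
  -- the complement is nonempty and closed
  have hcne : Ωᶜ.Nonempty := by
    by_contra h
    rw [not_nonempty_iff_eq_empty, compl_empty_iff] at h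
    exact NormedSpace.unbounded_univ ℝ Plane (h ▸ hbdd)
  set d₀ := Metric.infDist x₀ Ωᶜ with hd₀def
  have hd₀ : 0 < d₀ :=
    (hopen.isClosed_compl.notMem_iff_infDist_pos hcne).1 (by simpa using hx₀)
  -- the porosity constant
  set c : ℝ := min J 1 / 8 with hcdef
  have hc : 0 < c := by positivity
  have hc1 : c ≤ 1 / 8 := by
    rw [hcdef]
    have : min J 1 ≤ 1 := min_le_right _ _
    linarith
  -- balls inside Ω based on infDist
  have hball : ∀ (z : Plane) (ρ : ℝ), ρ < Metric.infDist z Ωᶜ →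
      Metric.closedBall z ρ ⊆ Ω := by
    intro z ρ hρ w hw
    by_contra hwΩ
    have : Metric.infDist z Ωᶜ ≤ dist z w := Metric.infDist_le_dist_of_mem hwΩ
    rw [dist_comm] at this
    exact absurd (Metric.mem_closedBall.1 hw) (by linarith)
  -- key porosity statement
  have key : ∀ x ∈ frontier Ω, ∀ r : ℝ, 0 < r → r ≤ 4 * d₀ →
      ∃ z : Plane, Metric.closedBall z (c * r) ⊆ Metric.closedBall x r ∧
        Metric.closedBall z (c * r) ⊆ Ω := by
    intro x hx r hr hrle
    have hxcl : x ∈ closure Ω := hx.1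
    obtain ⟨y, hyΩ, hyx⟩ : ∃ y ∈ Ω, dist x y < r / 2 :=
      Metric.mem_closure_iff.1 hxcl (r / 2) (by linarith)
    obtain ⟨len, γ, hlen0, hcont, hγ0, hγlen, hmem, hvar, hdist⟩ := hJohn y hyΩ
    by_cases hcase : r / 4 ≤ len
    · -- use the point at arclength r/4 along the John curve
      refine ⟨γ (r / 4), ?_, ?_⟩
      · have hmemI : (r / 4 : ℝ) ∈ Icc 0 len := ⟨by linarith, hcase⟩
        have hdzy : dist (γ (r / 4)) y ≤ r / 4 := by
          have h1 : edist (γ 0) (γ (r / 4)) ≤ eVariationOn γ (Icc 0 (r / 4)) :=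
            eVariationOn.edist_le γ ⟨le_refl _, by linarith⟩ ⟨by linarith, le_refl _⟩
          rw [hvar (r / 4) hmemI, hγ0] at h1
          have := (edist_le_ofReal (by linarith : (0:ℝ) ≤ r / 4)).1 h1
          rw [dist_comm]
          exact this
        intro w hw
        have hw' : dist w (γ (r / 4)) ≤ c * r := Metric.mem_closedBall.1 hw
        have : dist w x ≤ dist w (γ (r / 4)) + dist (γ (r / 4)) y + dist y x :=
          dist_triangle4 w (γ (r / 4)) y x
        rw [dist_comm y x] at this
        have hcr : c * r ≤ r / 8 := by nlinarith
        exact Metric.mem_closedBall.2 (by linarith)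
      · apply hball
        have hJd : J * (r / 4) ≤ Metric.infDist (γ (r / 4)) Ωᶜ :=
          hdist (r / 4) ⟨by linarith, hcase⟩
        have : c * r ≤ J * r / 8 := by
          have : min J 1 ≤ J := min_le_left _ _
          rw [hcdef]
          nlinarith
        nlinarith
    · -- the curve is short: use the John center x₀
      push_neg at hcase
      refine ⟨x₀, ?_, ?_⟩
      · have hdzy : dist x₀ y ≤ len := by
          have h1 : edist (γ 0) (γ len) ≤ eVariationOn γ (Icc 0 len) :=
            eVariationOn.edist_le γ ⟨le_refl _, hlen0⟩ ⟨hlen0, le_refl _⟩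
          rw [hvar len ⟨hlen0, le_refl _⟩, hγ0, hγlen] at h1
          have := (edist_le_ofReal hlen0).1 h1
          rw [dist_comm]
          exact this
        intro w hw
        have hw' : dist w x₀ ≤ c * r := Metric.mem_closedBall.1 hw
        have : dist w x ≤ dist w x₀ + dist x₀ y + dist y x := dist_triangle4 w x₀ y x
        rw [dist_comm y x] at this
        have hcr : c * r ≤ r / 8 := by nlinarith
        exact Metric.mem_closedBall.2 (by linarith)
      · apply hball
        have : c * r ≤ r / 8 := by nlinarith
        show c * r < d₀
        linarith
  -- now the measure-theoretic argument via Lebesgue density points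
  set s := frontier Ω with hsdef
  have hs : MeasurableSet s := isClosed_frontier.measurableSet
  by_contra hne
  have hbe := Besicovitch.ae_tendsto_measure_inter_div_of_measurableSet
    (volume : Measure Plane) hs
  obtain ⟨x, hxs, hxt⟩ : ∃ x, x ∈ s ∧ Filter.Tendsto
      (fun r => volume (s ∩ Metric.closedBall x r) / volume (Metric.closedBall x r))
      (nhdsWithin 0 (Ioi 0)) (nhds (s.indicator 1 x)) :=
    Measure.exists_mem_of_measure_ne_zero_of_ae hne (ae_restrict_of_ae hbe)
  rw [Set.indicator_of_mem hxs] at hxt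
  simp only [Pi.one_apply] at hxt
  -- the density ratio is bounded away from 1 for small r
  have hratio : ∀ r : ℝ, 0 < r → r ≤ 4 * d₀ →
      volume (s ∩ Metric.closedBall x r) / volume (Metric.closedBall x r)
        ≤ 1 - ENNReal.ofReal (c ^ 2) := by
    intro r hr hrle
    obtain ⟨z, hz1, hz2⟩ := key x hxs r hr hrle
    set M := volume (Metric.closedBall x r) with hM
    have hM0 : M ≠ 0 := (Metric.measure_closedBall_pos volume x hr).ne'
    have hMt : M ≠ ⊤ := measure_closedBall_lt_top.ne
    -- measure of the small ball
    have hsmall : volume (Metric.closedBall z (c * r)) = ENNReal.ofReal (c ^ 2) * M := by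
      have h1 := Measure.addHaar_closedBall (volume : Measure Plane) z
        (by positivity : (0:ℝ) ≤ c * r)
      have h2 := Measure.addHaar_closedBall (volume : Measure Plane) x hr.le
      have hfr : Module.finrank ℝ Plane = 2 := by
        simp [finrank_euclideanSpace]
      rw [hfr] at h1 h2
      rw [h1, hM, h2, ← mul_assoc, ← ENNReal.ofReal_mul (by positivity)]
      congr 1
      rw [mul_pow]
    -- disjointness from the frontier
    have hdisj : Disjoint (s ∩ Metric.closedBall x r) (Metric.closedBall z (c * r)) := by
      refine Set.disjoint_left.2 fun w hw1 hw2 => ?_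
      have hwΩ : w ∈ Ω := hz2 hw2
      have : w ∈ Ω ∩ frontier Ω := ⟨hwΩ, hw1.1⟩
      rw [hopen.inter_frontier_eq] at this
      exact this
    have hsum : volume (s ∩ Metric.closedBall x r) + volume (Metric.closedBall z (c * r))
        ≤ M := by
      rw [← measure_union hdisj measurableSet_closedBall]
      apply measure_mono
      exact Set.union_subset (Set.inter_subset_right) hz1
    rw [hsmall] at hsum
    have hAle : volume (s ∩ Metric.closedBall x r) ≤ (1 - ENNReal.ofReal (c ^ 2)) * M := by
      have hKt : ENNReal.ofReal (c ^ 2) * M ≠ ⊤ := ENNReal.mul_ne_top ENNReal.ofReal_ne_top hMt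
      have := ENNReal.le_sub_of_add_le_right hKt hsum
      rwa [ENNReal.sub_mul (fun _ _ => hMt), one_mul]
    calc volume (s ∩ Metric.closedBall x r) / M
        ≤ ((1 - ENNReal.ofReal (c ^ 2)) * M) / M := ENNReal.div_le_div_right hAle M
      _ = (1 - ENNReal.ofReal (c ^ 2)) * (M / M) := by rw [mul_div_assoc]
      _ = 1 - ENNReal.ofReal (c ^ 2) := by rw [ENNReal.div_self hM0 hMt, mul_one]
  -- contradiction with the density being 1
  have ha1 : (1 : ℝ≥0∞) - ENNReal.ofReal (c ^ 2) < 1 :=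
    ENNReal.sub_lt_self ENNReal.one_ne_top one_ne_zero
      (by simpa using (ENNReal.ofReal_pos.2 (by positivity : (0:ℝ) < c ^ 2)).ne')
  have hev1 : ∀ᶠ r in nhdsWithin 0 (Ioi 0),
      (1 : ℝ≥0∞) - ENNReal.ofReal (c ^ 2) <
        volume (s ∩ Metric.closedBall x r) / volume (Metric.closedBall x r) :=
    hxt (Ioi_mem_nhds ha1)
  have hev2 : ∀ᶠ r in nhdsWithin (0:ℝ) (Ioi 0), r ∈ Ioc (0:ℝ) (4 * d₀) :=
    Ioc_mem_nhdsGT_of_mem ⟨le_refl _, by linarith⟩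
  obtain ⟨r, hr1, hr2⟩ := (hev1.and hev2).exists
  exact absurd (hratio r hr2.1 hr2.2) (not_le.2 hr1)

end
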